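/- Fix constants k₀ ≥ 4 and C₀ ≥ 1000, let E ⊂ ℝ² be finite, and let Λ₀ be the associated collection of Calderón–Zygmund squares and Λ^♯ := {Q ∈ Λ₀ : E ∩ 2Q ≠ ∅}. Then: (1) if Q, Q' ∈ Λ₀ and closure(Q) ∩ closure(Q') ≠ ∅, then (1/4)δ_Q ≤ δ_{Q'} ≤ 4δ_Q; (2) there is a universal constant C such that for each Q ∈ Λ₀, #{Q' ∈ Λ₀ : (9/8)Q' ∩ (9/8)Q ≠ ∅} ≤ C; and (3) #(Λ^♯) ≤ C·#(E). -/

import Mathlib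

open Set Real Pointwise

noncomputable section

abbrev E2 := EuclideanSpace ℝ (Fin 2)

/-- Partial derivative in coordinate direction `i`. -/
noncomputable def pd (i : Fin 2) (F : E2 → ℝ) : E2 → ℝ :=
  fun x => fderiv ℝ F x (EuclideanSpace.single i 1)

/-- Iterated partial derivative `∂^α` for a multi-index `α = (α₁, α₂)`. -/
noncomputable def Dmul (α : ℕ × ℕ) (F : E2 → ℝ) : E2 → ℝ :=
  (pd 0)^[α.1] ((pd 1)^[α.2] F)

/-- The multi-indices `α` with `|α| ≤ 2`. -/
def multiIdx2 : Finset (ℕ × ℕ) :=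
  (Finset.range 3 ×ˢ Finset.range 3).filter (fun α => α.1 + α.2 ≤ 2)

/-- `(Σ_{|α| ≤ 2} |∂^α F (x)|²)^{1/2}`. -/
noncomputable def C2sum (F : E2 → ℝ) (x : E2) : ℝ :=
  Real.sqrt (∑ α ∈ multiIdx2, (Dmul α F x) ^ 2)

/-- `‖F‖_{C²(ℝ²)} ≤ M`. -/
def C2NormLE (F : E2 → ℝ) (M : ℝ) : Prop := ∀ x, C2sum F x ≤ M

/-- `f ∈ C²₊(E)`: `f` is the restriction to `E` of a nonnegative `C²` function of finite norm. -/
def MemC2plusTrace (E : Set E2) (f : E2 → ℝ) : Prop :=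
  ∃ F : E2 → ℝ, ContDiff ℝ 2 F ∧ (∀ x, 0 ≤ F x) ∧ (∀ x ∈ E, F x = f x) ∧ ∃ M, C2NormLE F M

/-- The trace norm `‖f‖_{C²₊(E)}`. -/
noncomputable def traceNormPlus (E : Set E2) (f : E2 → ℝ) : ℝ :=
  sInf { M | ∃ F : E2 → ℝ, ContDiff ℝ 2 F ∧ (∀ x, 0 ≤ F x) ∧ (∀ x ∈ E, F x = f x) ∧
    C2NormLE F M }

/-- The one-jet `𝒥_x F`, as an affine function on `ℝ²`. -/
noncomputable def jet (F : E2 → ℝ) (x : E2) : E2 → ℝ :=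
  fun y => F x + fderiv ℝ F x (y - x)

/-- The (half-open) square with center `c` and sidelength `δ`. -/
def sqC (c : E2) (δ : ℝ) : Set E2 :=
  {x | ∀ i : Fin 2, c i - δ / 2 ≤ x i ∧ x i < c i + δ / 2}

/-- `σ(x, S)`. -/
def sigmaSet (x : E2) (S : Set E2) : Set (E2 → ℝ) :=
  { P | ∃ φ : E2 → ℝ, ContDiff ℝ 2 φ ∧ (∀ z ∈ S, φ z = 0) ∧ C2NormLE φ 1 ∧ P = jet φ x }

/-- `σ^♯(x, k)`. -/
def sigmaSharp (E : Set E2) (x : E2) (k : ℕ) : Set (E2 → ℝ) :=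
  { P | ∀ S : Set E2, S ⊆ E → S.ncard ≤ k → P ∈ sigmaSet x S }

/-- `Γ₊(x, S, M)` (for the data `f`). -/
def GammaPlus (f : E2 → ℝ) (x : E2) (S : Set E2) (M : ℝ) : Set (E2 → ℝ) :=
  { P | ∃ F : E2 → ℝ, ContDiff ℝ 2 F ∧ (∀ y, 0 ≤ F y) ∧ (∀ z ∈ S, F z = f z) ∧
      C2NormLE F M ∧ P = jet F x }

/-- `Γ₊^♯(x, k, M)` (for `f` given on `E`). -/
def GammaSharp (E : Set E2) (f : E2 → ℝ) (x : E2) (k : ℕ) (M : ℝ) : Set (E2 → ℝ) :=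
  { P | ∀ S : Set E2, S ⊆ E → S.ncard ≤ k → P ∈ GammaPlus f x S M }

/-- `ℬ(x, δ) = {P : |∂^α P(x)| ≤ δ^{2-|α|} for |α| ≤ 1}`. -/
def jetBall (x : E2) (δ : ℝ) : Set (E2 → ℝ) :=
  { P | |P x| ≤ δ ^ 2 ∧ ∀ i : Fin 2, |fderiv ℝ P x (EuclideanSpace.single i 1)| ≤ δ }

/-- `|P|_{ℛ_x}`. -/
noncomputable def jetNormAt (x : E2) (P : E2 → ℝ) : ℝ :=
  Real.sqrt ((P x) ^ 2 + ‖fderiv ℝ P x‖ ^ 2)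

/-- diameter of a set of jets with respect to `|·|_{ℛ_x}`. -/
noncomputable def jetDiam (x : E2) (A : Set (E2 → ℝ)) : ℝ :=
  sSup { r | ∃ P ∈ A, ∃ P' ∈ A, r = jetNormAt x (P - P') }

noncomputable def vec2 (a b : ℝ) : E2 := (WithLp.equiv 2 (Fin 2 → ℝ)).symm ![a, b]

/-- A dyadic square is encoded by a triple `q = (i, j, k)`,
corresponding to `[2^k i, 2^k (i+1)) × [2^k j, 2^k (j+1))`; its sidelength is `2^k`. -/
noncomputable def dyadicLen (q : ℤ × ℤ × ℤ) : ℝ := (2 : ℝ) ^ q.2.2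

noncomputable def dyadicCenter (q : ℤ × ℤ × ℤ) : E2 :=
  vec2 ((2 : ℝ) ^ q.2.2 * ((q.1 : ℝ) + 1 / 2)) ((2 : ℝ) ^ q.2.2 * ((q.2.1 : ℝ) + 1 / 2))

noncomputable def dyadicSq (q : ℤ × ℤ × ℤ) : Set E2 := sqC (dyadicCenter q) (dyadicLen q)

/-- The concentric dilate `λQ` of the dyadic square `q`. -/
noncomputable def dilate (q : ℤ × ℤ × ℤ) (lam : ℝ) : Set E2 :=
  sqC (dyadicCenter q) (lam * dyadicLen q)

/-- The dyadic parent `Q⁺`. -/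
def dyadicParent (q : ℤ × ℤ × ℤ) : ℤ × ℤ × ℤ := (Int.fdiv q.1 2, Int.fdiv q.2.1 2, q.2.2 + 1)

/-- Membership in the Calderón–Zygmund collection `Λ₀`. -/
def memLambda0 (E : Set E2) (k₀ : ℕ) (C₀ : ℝ) (q : ℤ × ℤ × ℤ) : Prop :=
  dyadicLen q ≤ 1 ∧
  (∀ x ∈ dilate q 2, C₀ * dyadicLen q ≤ jetDiam x (sigmaSharp E x k₀)) ∧
  (∃ y ∈ dilate (dyadicParent q) 2, jetDiam y (sigmaSharp E y k₀) < 2 * C₀ * dyadicLen q)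

def Lambda0 (E : Set E2) (k₀ : ℕ) (C₀ : ℝ) : Set (ℤ × ℤ × ℤ) := { q | memLambda0 E k₀ C₀ q }

def LambdaSharp (E : Set E2) (k₀ : ℕ) (C₀ : ℝ) : Set (ℤ × ℤ × ℤ) :=
  { q | q ∈ Lambda0 E k₀ C₀ ∧ (E ∩ dilate q 2).Nonempty }

/-!
A square `Q' ∈ Λ₀` carries a point `y ∈ 2Q'⁺` with `diam σ^♯(y) < 2C₀δ_{Q'}`, while
`diam σ^♯ ≥ C₀δ_Q` on all of `2Q` for every `Q ∈ Λ₀`; hence `y` lies in no `2Q` with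
`δ_Q ≥ 2δ_{Q'}`. If the `9/8`-dilates of `Q, Q' ∈ Λ₀` meet and `δ_{Q'} ≤ δ_Q/8`, then
`2Q'⁺ ⊆ 2Q`, which is impossible; so neighbouring squares have comparable sizes, and boundedly
many of them fit around a given one.

For `#Λ^♯`, fix `z` and a square `Q₀ ∈ Λ₀` with `z ∈ 2Q₀`. For any larger `Q ∈ Λ₀` with
`z ∈ 2Q`, the point `y` of `Q₀` is within `7δ_{Q₀}/2` of `z` but outside `2Q`, so `z` is that close
to an edge line of `2Q`, which sits at an odd multiple of `δ_Q/2`. Such lines at two different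
scales above `16δ_{Q₀}` are `8δ_{Q₀}` apart, so only two such scales (one per coordinate) occur:
at most six scales in all, each contributing at most nine squares whose double contains `z`.
-/

def dyadicIdx (q : ℤ × ℤ × ℤ) : Fin 2 → ℤ := ![q.1, q.2.1]

lemma dyadicCenter_apply (q : ℤ × ℤ × ℤ) (i : Fin 2) :
    dyadicCenter q i = dyadicLen q * (dyadicIdx q i + 1 / 2) := by
  fin_cases i <;> rfl

lemma dyadicLen_pos (q : ℤ × ℤ × ℤ) : 0 < dyadicLen q := zpow_pos two_pos _

lemma two_pow_mul_zpow (n : ℕ) (a : ℤ) : (2 : ℝ) ^ n * 2 ^ a = 2 ^ (a + n) := by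
  rw [← zpow_natCast, ← zpow_add₀ two_ne_zero, add_comm]

lemma two_pow_mul_zpow_le_zpow {a b : ℤ} {n : ℕ} (h : a + n ≤ b) :
    (2 : ℝ) ^ n * 2 ^ a ≤ 2 ^ b :=
  two_pow_mul_zpow n a ▸ zpow_le_zpow_right₀ one_le_two h

lemma zpow_le_two_pow_mul_zpow {a b : ℤ} {n : ℕ} (h : b ≤ a + n) :
    (2 : ℝ) ^ b ≤ 2 ^ n * 2 ^ a :=
  two_pow_mul_zpow n a ▸ zpow_le_zpow_right₀ one_le_two h

lemma dyadicLen_parent (q : ℤ × ℤ × ℤ) : dyadicLen (dyadicParent q) = 2 * dyadicLen q := by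
  rw [dyadicLen, dyadicParent, zpow_add_one₀ two_ne_zero, mul_comm]; rfl

lemma mem_dilate {q : ℤ × ℤ × ℤ} {lam : ℝ} {x : E2} :
    x ∈ dilate q lam ↔ ∀ i, dyadicCenter q i - lam * dyadicLen q / 2 ≤ x i ∧
      x i < dyadicCenter q i + lam * dyadicLen q / 2 :=
  Iff.rfl

lemma abs_dyadicCenter_parent_sub (q : ℤ × ℤ × ℤ) (i : Fin 2) :
    |dyadicCenter (dyadicParent q) i - dyadicCenter q i| = dyadicLen q / 2 := by
  have hidx : dyadicIdx (dyadicParent q) i = (dyadicIdx q i).fdiv 2 := by fin_cases i <;> rfl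
  obtain ⟨m, hm⟩ := Int.even_or_odd' (dyadicIdx q i)
  have hdiv : (dyadicIdx q i).fdiv 2 = m := by
    rw [Int.fdiv_eq_ediv_of_nonneg _ zero_le_two]; omega
  rw [dyadicCenter_apply, dyadicCenter_apply, dyadicLen_parent, hidx, hdiv]
  have hδ : 0 < dyadicLen q / 2 := by linarith [dyadicLen_pos q]
  rcases hm with hm | hm <;> rw [hm] <;> push_cast
  · rw [show 2 * dyadicLen q * (m + 1 / 2) - dyadicLen q * (2 * m + 1 / 2) = dyadicLen q / 2 by
      ring, abs_of_pos hδ]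
  · rw [show 2 * dyadicLen q * (m + 1 / 2) - dyadicLen q * (2 * m + 1 + 1 / 2) = -(dyadicLen q / 2)
      by ring, abs_neg, abs_of_pos hδ]

lemma abs_dyadicCenter_sub_lt_of_inter {q q' : ℤ × ℤ × ℤ} {lam : ℝ}
    (h : (dilate q' lam ∩ dilate q lam).Nonempty) (i : Fin 2) :
    |dyadicCenter q' i - dyadicCenter q i| < lam / 2 * (dyadicLen q + dyadicLen q') := by
  obtain ⟨p, hp', hp⟩ := h
  have := hp i; have := hp' i
  rw [abs_lt]; constructor <;> linarith

lemma abs_sub_lt_of_mem_dilate_parent {q : ℤ × ℤ × ℤ} {y z : E2} (hz : z ∈ dilate q 2)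
    (hy : y ∈ dilate (dyadicParent q) 2) (i : Fin 2) :
    |y i - z i| < 7 / 2 * dyadicLen q := by
  have := hz i; have := hy i
  have := abs_le.mp (abs_dyadicCenter_parent_sub q i).le
  rw [dyadicLen_parent] at *
  rw [abs_lt]; constructor <;> linarith

lemma dilate_parent_subset_of_inter {q q' : ℤ × ℤ × ℤ}
    (h : (dilate q' (9 / 8) ∩ dilate q (9 / 8)).Nonempty) (hlen : 8 * dyadicLen q' ≤ dyadicLen q) :
    dilate (dyadicParent q') 2 ⊆ dilate q 2 := by
  intro x hx i
  have := hx i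
  have := abs_lt.mp (abs_dyadicCenter_sub_lt_of_inter h i)
  have := abs_le.mp (abs_dyadicCenter_parent_sub q' i).le
  have := dyadicLen_pos q'
  rw [dyadicLen_parent] at *
  constructor <;> linarith

lemma closure_sqC_subset {c : E2} {δ δ' : ℝ} (h : δ < δ') : closure (sqC c δ) ⊆ sqC c δ' := by
  have hclosed : IsClosed {x : E2 | ∀ i, c i - δ / 2 ≤ x i ∧ x i ≤ c i + δ / 2} := by
    simp only [ofPred_forall, ofPred_and]
    exact isClosed_iInter fun i =>
      (isClosed_le continuous_const (PiLp.continuous_apply 2 _ i)).inter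
        (isClosed_le (PiLp.continuous_apply 2 _ i) continuous_const)
  refine (closure_minimal (fun x hx i => ⟨(hx i).1, (hx i).2.le⟩) hclosed).trans fun x hx i => ?_
  have := hx i
  constructor <;> linarith

lemma closure_dyadicSq_subset_dilate (q : ℤ × ℤ × ℤ) : closure (dyadicSq q) ⊆ dilate q (9 / 8) :=
  closure_sqC_subset (by linarith [dyadicLen_pos q])

lemma Int.abs_sub_ceil_le_of_abs_sub_le {n r : ℤ} {t : ℝ} (h : |(n : ℝ) - t| ≤ r) :
    |n - ⌈t⌉| ≤ r := by
  have := abs_le.mp h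
  have := Int.le_ceil t
  have := Int.ceil_lt_add_one t
  have hup : n - ⌈t⌉ ≤ r := by exact_mod_cast (show ((n - ⌈t⌉ : ℤ) : ℝ) ≤ r by push_cast; linarith)
  have hlow : -r - 1 < n - ⌈t⌉ := by
    exact_mod_cast (show ((-r - 1 : ℤ) : ℝ) < (n - ⌈t⌉ : ℤ) by push_cast; linarith)
  rw [abs_le]; omega

lemma abs_dyadicIdx_sub_ceil_le {q : ℤ × ℤ × ℤ} {i : Fin 2} {x : ℝ} {r : ℤ}
    (h : |dyadicCenter q i - x| ≤ r * dyadicLen q) :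
    |dyadicIdx q i - ⌈x / dyadicLen q - 1 / 2⌉| ≤ r := by
  have hδ := dyadicLen_pos q
  refine Int.abs_sub_ceil_le_of_abs_sub_le ?_
  rw [show (dyadicIdx q i : ℝ) - (x / dyadicLen q - 1 / 2) = (dyadicCenter q i - x) / dyadicLen q by
    rw [dyadicCenter_apply]; field_simp; ring, abs_div, abs_of_pos hδ, div_le_iff₀ hδ]
  exact h

lemma ncard_le_of_abs_dyadicCenter_sub_le {S : Set (ℤ × ℤ × ℤ)} (K : Finset ℤ) (c : E2) (r : ℕ)
    (hK : ∀ q ∈ S, q.2.2 ∈ K)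
    (hc : ∀ q ∈ S, ∀ i, |dyadicCenter q i - c i| ≤ r * dyadicLen q) :
    S.Finite ∧ S.ncard ≤ K.card * (2 * r + 1) ^ 2 := by
  let shift : ℤ → Fin 2 → ℤ := fun k i => ⌈c i / 2 ^ k - 1 / 2⌉
  let φ : ℤ × ℤ × ℤ → ℤ × ℤ × ℤ := fun q =>
    (q.2.2, dyadicIdx q 0 - shift q.2.2 0, dyadicIdx q 1 - shift q.2.2 1)
  have hφ : φ.Injective := by
    rintro ⟨a, b, k⟩ ⟨a', b', k'⟩ h
    simp only [φ, dyadicIdx, Prod.mk.injEq] at h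
    obtain ⟨rfl, h₀, h₁⟩ := h
    simp_all
  let T : Finset (ℤ × ℤ × ℤ) := K ×ˢ Finset.Icc (-r : ℤ) r ×ˢ Finset.Icc (-r : ℤ) r
  have hmaps : ∀ q ∈ S, φ q ∈ (T : Set (ℤ × ℤ × ℤ)) := by
    intro q hq
    have h₀ := abs_le.mp (abs_dyadicIdx_sub_ceil_le (r := r) (by exact_mod_cast hc q hq 0))
    have h₁ := abs_le.mp (abs_dyadicIdx_sub_ceil_le (r := r) (by exact_mod_cast hc q hq 1))
    simp only [T, φ, shift, Finset.coe_product, Set.mem_prod, Finset.mem_coe, Finset.mem_Icc]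
    exact ⟨hK q hq, h₀, h₁⟩
  refine ⟨(T.finite_toSet.preimage hφ.injOn).subset hmaps, ?_⟩
  calc S.ncard ≤ (T : Set (ℤ × ℤ × ℤ)).ncard := Set.ncard_le_ncard_of_injOn φ hmaps hφ.injOn
    _ = K.card * (2 * r + 1) ^ 2 := by
      rw [Set.ncard_coe_finset, Finset.card_product, Finset.card_product, Int.card_Icc]
      rw [show ((r : ℤ) + 1 - -r).toNat = 2 * r + 1 by omega]; ring

lemma exists_odd_abs_sub_lt_of_mem_dilate_of_not_mem {q : ℤ × ℤ × ℤ} {y z : E2} {ε : ℝ}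
    (hz : z ∈ dilate q 2) (hy : y ∉ dilate q 2) (hyz : ∀ i, |y i - z i| < ε) :
    ∃ i, ∃ o : ℤ, Odd o ∧ |z i - dyadicLen q / 2 * o| < ε := by
  rw [mem_dilate] at hy
  push Not at hy
  obtain ⟨i, hi⟩ := hy
  have hc := dyadicCenter_apply q i
  have := hz i
  have := abs_lt.mp (hyz i)
  by_cases hlow : dyadicCenter q i - 2 * dyadicLen q / 2 ≤ y i
  · have := hi hlow
    refine ⟨i, 2 * dyadicIdx q i + 3, ⟨dyadicIdx q i + 1, by ring⟩, abs_lt.mpr ?_⟩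
    push_cast; constructor <;> linarith
  · refine ⟨i, 2 * dyadicIdx q i - 1, ⟨dyadicIdx q i - 1, by ring⟩, abs_lt.mpr ?_⟩
    push_cast; constructor <;> linarith

lemma zpow_le_abs_zpow_mul_odd_sub {m k k' o o' : ℤ} (ho : Odd o) (ho' : Odd o') (hkk' : k ≠ k')
    (hk : m ≤ k) (hk' : m ≤ k') : (2 : ℝ) ^ m ≤ |(2 : ℝ) ^ k * o - 2 ^ k' * o'| := by
  wlog hlt : k' < k generalizing k k' o o'
  · rw [abs_sub_comm]
    exact this ho' ho hkk'.symm hk' hk (by omega)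
  obtain ⟨d, hd⟩ : ∃ d : ℕ, k = k' + (d + 1) := ⟨(k - k' - 1).toNat, by omega⟩
  have hN : Odd (2 ^ (d + 1) * o - o') := (Even.mul_right (by simp [parity_simps]) o).sub_odd ho'
  have hN1 : (1 : ℝ) ≤ |((2 ^ (d + 1) * o - o' : ℤ) : ℝ)| := by
    rw [← Int.cast_abs, ← Int.cast_one, Int.cast_le]
    exact Int.one_le_abs fun h => by simp [h] at hN
  calc (2 : ℝ) ^ m ≤ 2 ^ k' * 1 := by rw [mul_one]; exact zpow_le_zpow_right₀ one_le_two hk'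
    _ ≤ 2 ^ k' * |((2 ^ (d + 1) * o - o' : ℤ) : ℝ)| := by gcongr
    _ = |(2 : ℝ) ^ k' * ((2 ^ (d + 1) * o - o' : ℤ) : ℝ)| := by
      rw [abs_mul, abs_of_pos (zpow_pos (two_pos : (0 : ℝ) < 2) k')]
    _ = |(2 : ℝ) ^ k * o - 2 ^ k' * o'| := by
      rw [hd, zpow_add₀ two_ne_zero, zpow_add_one₀ two_ne_zero, zpow_natCast]; push_cast; ring_nf

lemma Int.finite_and_ncard_le_of_card_tail_le {K : Set ℤ} (g n : ℕ)
    (h : ∀ m ∈ K, ∀ s : Finset ℤ, ↑s ⊆ K → (∀ k ∈ s, m + g ≤ k) → s.card ≤ n) :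
    K.Finite ∧ K.ncard ≤ g + n := by
  have hcard : ∀ s : Finset ℤ, ↑s ⊆ K → s.card ≤ g + n := by
    intro s hs
    rcases s.eq_empty_or_nonempty with rfl | hne
    · simp
    set m := s.min' hne
    have hsplit : s ⊆ Finset.Ico m (m + g) ∪ s.filter (fun k => m + g ≤ k) := by
      intro k hk
      have := s.min'_le k hk
      simp only [Finset.mem_union, Finset.mem_Ico, Finset.mem_filter, hk, true_and]
      omega
    calc s.card ≤ (Finset.Ico m (m + g)).card + (s.filter fun k => m + g ≤ k).card :=
          (Finset.card_le_card hsplit).trans (Finset.card_union_le _ _)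
      _ ≤ g + n := by
        gcongr
        · simp
        · exact h m (hs (s.min'_mem hne)) _ (fun k hk => hs (Finset.mem_filter.mp hk).1)
            fun k hk => (Finset.mem_filter.mp hk).2
  have hfin : K.Finite := by
    by_contra hinf
    obtain ⟨s, hs, hs_card⟩ := Set.Infinite.exists_subset_card_eq hinf (g + n + 1)
    have := hcard s hs
    omega
  exact ⟨hfin, by rw [Set.ncard_eq_toFinset_card K hfin]; exact hcard _ (by simp)⟩

def Lambda0At (E : Set E2) (k₀ : ℕ) (C₀ : ℝ) (z : E2) : Set (ℤ × ℤ × ℤ) :=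
  {q | q ∈ Lambda0 E k₀ C₀ ∧ z ∈ dilate q 2}

section Lambda0

variable {E : Set E2} {k₀ : ℕ} {C₀ : ℝ}

lemma exists_mem_dilate_parent_not_mem_dilate (hC₀ : 0 < C₀) {q' : ℤ × ℤ × ℤ}
    (hq' : q' ∈ Lambda0 E k₀ C₀) :
    ∃ y ∈ dilate (dyadicParent q') 2, ∀ q ∈ Lambda0 E k₀ C₀,
      2 * dyadicLen q' ≤ dyadicLen q → y ∉ dilate q 2 := by
  obtain ⟨-, -, y, hy, hdiam⟩ := hq'
  refine ⟨y, hy, fun q hq hlen hyq => ?_⟩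
  have := hq.2.1 y hyq
  nlinarith

lemma scale_le_add_two_of_inter (hC₀ : 0 < C₀) {q q' : ℤ × ℤ × ℤ}
    (hq : q ∈ Lambda0 E k₀ C₀) (hq' : q' ∈ Lambda0 E k₀ C₀)
    (h : (dilate q' (9 / 8) ∩ dilate q (9 / 8)).Nonempty) : q.2.2 ≤ q'.2.2 + 2 := by
  by_contra! hscale
  have hlen : 2 ^ 3 * dyadicLen q' ≤ dyadicLen q := two_pow_mul_zpow_le_zpow (by push_cast; omega)
  obtain ⟨y, hy, hy_not⟩ := exists_mem_dilate_parent_not_mem_dilate hC₀ hq'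
  exact hy_not q hq (by linarith [dyadicLen_pos q'])
    (dilate_parent_subset_of_inter h (by linarith) hy)

lemma dyadicLen_le_four_mul_of_inter (hC₀ : 0 < C₀) {q q' : ℤ × ℤ × ℤ}
    (hq : q ∈ Lambda0 E k₀ C₀) (hq' : q' ∈ Lambda0 E k₀ C₀)
    (h : (dilate q' (9 / 8) ∩ dilate q (9 / 8)).Nonempty) : dyadicLen q ≤ 4 * dyadicLen q' := by
  have : dyadicLen q ≤ 2 ^ 2 * dyadicLen q' :=
    zpow_le_two_pow_mul_zpow (by push_cast; exact scale_le_add_two_of_inter hC₀ hq hq' h)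
  linarith

lemma ncard_neighbours_le (hC₀ : 0 < C₀) {q : ℤ × ℤ × ℤ} (hq : q ∈ Lambda0 E k₀ C₀) :
    {q' | q' ∈ Lambda0 E k₀ C₀ ∧ (dilate q' (9 / 8) ∩ dilate q (9 / 8)).Nonempty}.ncard ≤ 245 := by
  refine (ncard_le_of_abs_dyadicCenter_sub_le (Finset.Icc (q.2.2 - 2) (q.2.2 + 2))
    (dyadicCenter q) 3 ?_ ?_).2.trans (by simp; omega)
  · rintro q' ⟨hq', h⟩
    have := scale_le_add_two_of_inter hC₀ hq hq' h
    have := scale_le_add_two_of_inter hC₀ hq' hq (inter_comm _ _ ▸ h)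
    rw [Finset.mem_Icc]; omega
  · rintro q' ⟨hq', h⟩ i
    have := abs_dyadicCenter_sub_lt_of_inter h i
    have := dyadicLen_le_four_mul_of_inter hC₀ hq hq' h
    have := dyadicLen_pos q'
    push_cast; linarith

lemma exists_odd_abs_sub_lt_of_mem_Lambda0At (hC₀ : 0 < C₀) {z : E2} {q₀ q : ℤ × ℤ × ℤ}
    (hq₀ : q₀ ∈ Lambda0At E k₀ C₀ z) (hq : q ∈ Lambda0At E k₀ C₀ z) (hscale : q₀.2.2 + 1 ≤ q.2.2) :
    ∃ i, ∃ o : ℤ, Odd o ∧ |z i - dyadicLen q / 2 * o| < 7 / 2 * dyadicLen q₀ := by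
  obtain ⟨y, hy, hy_not⟩ := exists_mem_dilate_parent_not_mem_dilate hC₀ hq₀.1
  have hlen : 2 ^ 1 * dyadicLen q₀ ≤ dyadicLen q := two_pow_mul_zpow_le_zpow (by simpa using hscale)
  exact exists_odd_abs_sub_lt_of_mem_dilate_of_not_mem hq.2 (hy_not q hq.1 (by simpa using hlen))
    (abs_sub_lt_of_mem_dilate_parent hq₀.2 hy)

lemma card_le_two_of_subset_scales (hC₀ : 0 < C₀) {z : E2} {q₀ : ℤ × ℤ × ℤ}
    (hq₀ : q₀ ∈ Lambda0At E k₀ C₀ z) (s : Finset ℤ)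
    (hs : ↑s ⊆ (fun q => q.2.2) '' Lambda0At E k₀ C₀ z) (hscale : ∀ k ∈ s, q₀.2.2 + 4 ≤ k) :
    s.card ≤ 2 := by
  set ε := 7 / 2 * dyadicLen q₀ with hε
  have near : ∀ k ∈ s, ∃ i, ∃ o : ℤ, Odd o ∧ |z i - (2 : ℝ) ^ k / 2 * o| < ε := by
    intro k hk
    obtain ⟨q, hq, rfl⟩ := hs hk
    exact exists_odd_abs_sub_lt_of_mem_Lambda0At hC₀ hq₀ hq (by linarith [hscale _ hk])
  have far : ∀ k ∈ s, ∀ k' ∈ s, k ≠ k' → ∀ (i : Fin 2) (o o' : ℤ), Odd o → Odd o' →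
      |z i - (2 : ℝ) ^ k / 2 * o| < ε → |z i - (2 : ℝ) ^ k' / 2 * o'| < ε → False := by
    intro k hk k' hk' hkk' i o o' ho ho' h h'
    have hsep := zpow_le_abs_zpow_mul_odd_sub ho ho' hkk' (hscale k hk) (hscale k' hk')
    have hlen : 2 ^ 4 * dyadicLen q₀ ≤ 2 ^ (q₀.2.2 + 4) := two_pow_mul_zpow_le_zpow le_rfl
    have hclose : |(2 : ℝ) ^ k * o - 2 ^ k' * o'| < 4 * ε := by
      rw [abs_lt] at h h' ⊢; constructor <;> linarith
    linarith [dyadicLen_pos q₀]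
  by_contra! h
  obtain ⟨a, ha, b, hb, c, hc, hab, hac, hbc⟩ := Finset.two_lt_card.mp h
  obtain ⟨i, o, ho, hi⟩ := near a ha
  obtain ⟨j, p, hp, hj⟩ := near b hb
  obtain ⟨l, r, hr, hl⟩ := near c hc
  have pigeonhole : ∀ i j l : Fin 2, i = j ∨ i = l ∨ j = l := by decide
  rcases pigeonhole i j l with rfl | rfl | rfl
  · exact far a ha b hb hab i o p ho hp hi hj
  · exact far a ha c hc hac i o r ho hr hi hl
  · exact far b hb c hc hbc j p r hp hr hj hl

lemma finite_scales_and_ncard_le (hC₀ : 0 < C₀) (z : E2) :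
    ((fun q => q.2.2) '' Lambda0At E k₀ C₀ z).Finite ∧
      ((fun q => q.2.2) '' Lambda0At E k₀ C₀ z).ncard ≤ 6 :=
  Int.finite_and_ncard_le_of_card_tail_le 4 2 fun _ hm s hs hge => by
    obtain ⟨q₀, hq₀, rfl⟩ := hm
    exact card_le_two_of_subset_scales hC₀ hq₀ s hs (by exact_mod_cast hge)

lemma finite_Lambda0At_and_ncard_le (hC₀ : 0 < C₀) (z : E2) :
    (Lambda0At E k₀ C₀ z).Finite ∧ (Lambda0At E k₀ C₀ z).ncard ≤ 54 := by
  obtain ⟨hfin, hcard⟩ := finite_scales_and_ncard_le (E := E) (k₀ := k₀) hC₀ z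
  obtain ⟨hS, hS_card⟩ := ncard_le_of_abs_dyadicCenter_sub_le hfin.toFinset z 1
    (fun q hq => hfin.mem_toFinset.mpr ⟨q, hq, rfl⟩) fun q hq i => by
      have := hq.2 i
      rw [abs_le]; push_cast; constructor <;> linarith
  rw [← Set.ncard_eq_toFinset_card _ hfin] at hS_card
  exact ⟨hS, by omega⟩

lemma ncard_LambdaSharp_le (hC₀ : 0 < C₀) (hE : E.Finite) :
    (LambdaSharp E k₀ C₀).ncard ≤ 54 * E.ncard := by
  have hsub : LambdaSharp E k₀ C₀ ⊆ ⋃ z ∈ hE.toFinset, Lambda0At E k₀ C₀ z := by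
    rintro q ⟨hq, z, hzE, hzq⟩
    exact Set.mem_biUnion (hE.mem_toFinset.mpr hzE) ⟨hq, hzq⟩
  calc (LambdaSharp E k₀ C₀).ncard ≤ (⋃ z ∈ hE.toFinset, Lambda0At E k₀ C₀ z).ncard :=
        Set.ncard_le_ncard hsub
          (hE.toFinset.finite_toSet.biUnion fun z _ => (finite_Lambda0At_and_ncard_le hC₀ z).1)
    _ ≤ ∑ z ∈ hE.toFinset, (Lambda0At E k₀ C₀ z).ncard := Finset.set_ncard_biUnion_le _ _
    _ ≤ ∑ z ∈ hE.toFinset, 54 :=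
        Finset.sum_le_sum fun z _ => (finite_Lambda0At_and_ncard_le hC₀ z).2
    _ = 54 * E.ncard := by
        rw [Finset.sum_const, smul_eq_mul, mul_comm, Set.ncard_eq_toFinset_card E hE]

end Lambda0

/-- Basic properties of the Calderón–Zygmund squares:
good geometry of neighbours, bounded intersection, and `#(Λ^♯) ≤ C·#(E)`. -/
theorem CZ_squares_properties :
    ∀ (k₀ : ℕ) (C₀ : ℝ), 4 ≤ k₀ → 1000 ≤ C₀ →
      ∃ C : ℕ,
        ∀ E : Set E2, E.Finite →
          (∀ q ∈ Lambda0 E k₀ C₀, ∀ q' ∈ Lambda0 E k₀ C₀,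
            (closure (dyadicSq q) ∩ closure (dyadicSq q')).Nonempty →
              dyadicLen q / 4 ≤ dyadicLen q' ∧ dyadicLen q' ≤ 4 * dyadicLen q) ∧
          (∀ q ∈ Lambda0 E k₀ C₀,
            {q' | q' ∈ Lambda0 E k₀ C₀ ∧
              (dilate q' (9 / 8) ∩ dilate q (9 / 8)).Nonempty}.ncard ≤ C) ∧
          (LambdaSharp E k₀ C₀).ncard ≤ C * E.ncard := by
  intro k₀ C₀ _ hC₀
  have hC₀_pos : 0 < C₀ := by linarith
  refine ⟨245, fun E hE => ⟨fun q hq q' hq' h => ?_, fun q hq => ncard_neighbours_le hC₀_pos hq,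
    (ncard_LambdaSharp_le hC₀_pos hE).trans (by omega)⟩⟩
  obtain ⟨p, hp, hp'⟩ := h
  have hmeet : (dilate q' (9 / 8) ∩ dilate q (9 / 8)).Nonempty :=
    ⟨p, closure_dyadicSq_subset_dilate q' hp', closure_dyadicSq_subset_dilate q hp⟩
  have := dyadicLen_le_four_mul_of_inter hC₀_pos hq hq' hmeet
  exact ⟨by linarith, dyadicLen_le_four_mul_of_inter hC₀_pos hq' hq (inter_comm _ _ ▸ hmeet)⟩

end
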